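/- Let G be a two-player win/lose game with prefix-independent winning condition W, and let V⁻ := V \ (W₀ᵐ(G) ∪ W₁ᵐ(G)). Then for every v ∈ V⁻ there exists u ∈ V⁻ with (v,u) ∈ E. -/

import Mathlib

/-!
If every successor of `v` lies in `W₀ᵐ(G) ∪ W₁ᵐ(G)`, then so does `v`. Either the owner of `v`
can move into its own memoryless winning region, and a strategy winning from there, redirected at
`v` towards that successor, also wins from `v`; or every successor lies in the opponent's region,
and the opponent has one memoryless strategy winning from all of them at once, which then also
wins from `v`.
-/

/-- A run in the graph `(V, E)`: an infinite `E`-path. -/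
def IsRun {V : Type*} (E : Set (V × V)) (ρ : ℕ → V) : Prop :=
  ∀ n, (ρ n, ρ (n + 1)) ∈ E

/-- A run is compatible with a strategy `σ` of the player controlling `Vi`. -/
def Compatible {V : Type*} (Vi : Set V) (σ : V → V) (ρ : ℕ → V) : Prop :=
  ∀ n, ρ n ∈ Vi → ρ (n + 1) = σ (ρ n)

/-- A memoryless strategy for the player controlling `Vi` (encoded as a total
function whose values matter only on `Vi`). -/
def IsStrategy {V : Type*} (Vi : Set V) (E : Set (V × V)) (σ : V → V) : Prop :=
  ∀ v ∈ Vi, (v, σ v) ∈ E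

/-- The strategy `σ` of the player controlling `Vi` whose winning condition is
`Win` wins from `v`: every compatible run from `v` has its color sequence in `Win`. -/
def WinsFrom {V : Type*} {C : Type*} (Vi : Set V) (E : Set (V × V)) (π : V → C)
    (Win : Set (ℕ → C)) (σ : V → V) (v : V) : Prop :=
  ∀ ρ : ℕ → V, ρ 0 = v → IsRun E ρ → Compatible Vi σ ρ → (fun n => π (ρ n)) ∈ Win

/-- `Wᵢᵐ(G, σ)`: the vertices from which `σ` wins. -/
def WinRegion {V : Type*} {C : Type*} (Vi : Set V) (E : Set (V × V)) (π : V → C)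
    (Win : Set (ℕ → C)) (σ : V → V) : Set V :=
  {v | WinsFrom Vi E π Win σ v}

/-- `Wᵢᵐ(G)`: the vertices from which some memoryless strategy wins. -/
def WinRegionAll {V : Type*} {C : Type*} (Vi : Set V) (E : Set (V × V)) (π : V → C)
    (Win : Set (ℕ → C)) : Set V :=
  {v | ∃ σ, IsStrategy Vi E σ ∧ WinsFrom Vi E π Win σ v}

/-- Concatenation `w·ρ` of a finite word and an infinite sequence. -/
def ListAppend {C : Type*} (w : List C) (ρ : ℕ → C) : ℕ → C :=
  fun n => if h : n < w.length then w.get ⟨n, h⟩ else ρ (n - w.length)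

/-- `W` is prefix-independent: `wρ ∈ W ↔ ρ ∈ W`. -/
def PrefixIndependent {C : Type*} (W : Set (ℕ → C)) : Prop :=
  ∀ (w : List C) (ρ : ℕ → C), ListAppend w ρ ∈ W ↔ ρ ∈ W

/-- Uniform memoryless determinacy of the game `⟨V₀, V₁, E, π, W⟩`. -/
def UniformlyDetermined {V : Type*} {C : Type*} (V0 V1 : Set V) (E : Set (V × V))
    (π : V → C) (W : Set (ℕ → C)) : Prop :=
  ∃ σ τ, IsStrategy V0 E σ ∧ IsStrategy V1 E τ ∧
    WinRegion V0 E π W σ ∪ WinRegion V1 E π Wᶜ τ = Set.univ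

theorem PrefixIndependent.compl {C : Type*} {W : Set (ℕ → C)} (hW : PrefixIndependent W) :
    PrefixIndependent Wᶜ :=
  fun w ρ => not_congr (hW w ρ)

theorem PrefixIndependent.mem_iff_shift {C : Type*} {W : Set (ℕ → C)}
    (hW : PrefixIndependent W) (f : ℕ → C) (N : ℕ) :
    f ∈ W ↔ (fun n => f (n + N)) ∈ W := by
  have hsplit : f = ListAppend (List.ofFn fun i : Fin N => f i) (fun n => f (n + N)) := by
    funext n
    by_cases hn : n < N
    · simp [ListAppend, hn]
    · simp only [ListAppend, List.length_ofFn, dif_neg hn]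
      congr 1
      omega
  conv_lhs => rw [hsplit]
  exact hW _ _

section Runs

variable {V C : Type*} {Vi : Set V} {E : Set (V × V)} {π : V → C} {Win : Set (ℕ → C)}
  {σ : V → V}

theorem WinsFrom.run_mem (hW : PrefixIndependent Win) {ρ : ℕ → V} {N : ℕ}
    (hwin : WinsFrom Vi E π Win σ (ρ N)) (hrun : IsRun E ρ)
    (hc : ∀ n, N ≤ n → ρ n ∈ Vi → ρ (n + 1) = σ (ρ n)) :
    (fun n => π (ρ n)) ∈ Win := by
  rw [hW.mem_iff_shift _ N]
  refine hwin (fun n => ρ (n + N)) (congrArg ρ N.zero_add) (fun n => ?_) (fun n hn => ?_)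
  · simpa only [Nat.add_right_comm] using hrun (n + N)
  · simpa only [Nat.add_right_comm] using hc (n + N) (Nat.le_add_left N n) hn

theorem WinsFrom.of_edge (hW : PrefixIndependent Win) {x y : V}
    (hx : WinsFrom Vi E π Win σ x) (hxy : (x, y) ∈ E) (hσ : x ∈ Vi → y = σ x) :
    WinsFrom Vi E π Win σ y := by
  intro ρ hρ0 hrun hc
  let ρ' : ℕ → V := fun | 0 => x | n + 1 => ρ n
  have hrun' : IsRun E ρ' := by
    rintro (_ | n)
    · simpa [ρ', hρ0] using hxy
    · exact hrun n
  have hc' : Compatible Vi σ ρ' := by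
    rintro (_ | n) hn
    · simpa [ρ', hρ0] using hσ hn
    · exact hc n hn
  exact (hW.mem_iff_shift _ 1).1 (hx ρ' rfl hrun' hc')

end Runs

section Uniformization

variable {V C : Type*} {Vi : Set V} {E : Set (V × V)} {π : V → C} {Win : Set (ℕ → C)}
  [LinearOrder (V → V)] [WellFoundedLT (V → V)]

variable (Vi E π Win) in
open Classical in
noncomputable def leastWinningStrategy (σ₀ : V → V) (v : V) : V → V :=
  if h : v ∈ WinRegionAll Vi E π Win then
    wellFounded_lt.min {σ | IsStrategy Vi E σ ∧ WinsFrom Vi E π Win σ v} h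
  else σ₀

theorem leastWinningStrategy_spec {σ₀ : V → V} {v : V} (hv : v ∈ WinRegionAll Vi E π Win) :
    IsStrategy Vi E (leastWinningStrategy Vi E π Win σ₀ v) ∧
      WinsFrom Vi E π Win (leastWinningStrategy Vi E π Win σ₀ v) v := by
  rw [leastWinningStrategy, dif_pos hv]
  exact wellFounded_lt.min_mem _ hv

theorem isStrategy_leastWinningStrategy {σ₀ : V → V} (hσ₀ : IsStrategy Vi E σ₀) (v : V) :
    IsStrategy Vi E (leastWinningStrategy Vi E π Win σ₀ v) := by
  by_cases hv : v ∈ WinRegionAll Vi E π Win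
  · exact (leastWinningStrategy_spec hv).1
  · rwa [leastWinningStrategy, dif_neg hv]

theorem leastWinningStrategy_le {σ₀ σ : V → V} {v : V} (hσ : IsStrategy Vi E σ)
    (hσv : WinsFrom Vi E π Win σ v) : leastWinningStrategy Vi E π Win σ₀ v ≤ σ := by
  rw [leastWinningStrategy, dif_pos (show v ∈ WinRegionAll Vi E π Win from ⟨σ, hσ, hσv⟩)]
  exact wellFounded_lt.min_le (s := {σ | IsStrategy Vi E σ ∧ WinsFrom Vi E π Win σ v}) ⟨hσ, hσv⟩

variable (Vi E π Win) in
noncomputable def uniformStrategy (σ₀ : V → V) (v : V) : V :=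
  leastWinningStrategy Vi E π Win σ₀ v v

/-- Along a play of `uniformStrategy`, the least winning strategy of the current vertex can only
decrease, so it is eventually a fixed strategy `τ` which the play then follows; as `τ` wins from
the vertex where this happens, prefix independence makes the whole play winning. -/
theorem winsFrom_uniformStrategy (hW : PrefixIndependent Win) (σ₀ : V → V) {v : V}
    (hv : v ∈ WinRegionAll Vi E π Win) :
    WinsFrom Vi E π Win (uniformStrategy Vi E π Win σ₀) v := by
  intro ρ hρ0 hrun hc
  set τ : ℕ → V → V := fun n => leastWinningStrategy Vi E π Win σ₀ (ρ n)
  have hnext : ∀ n, ρ n ∈ WinRegionAll Vi E π Win →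
      IsStrategy Vi E (τ n) ∧ WinsFrom Vi E π Win (τ n) (ρ (n + 1)) := fun n hn =>
    ⟨(leastWinningStrategy_spec hn).1,
      (leastWinningStrategy_spec hn).2.of_edge hW (hrun n) (hc n)⟩
  have hreg : ∀ n, ρ n ∈ WinRegionAll Vi E π Win := by
    intro n
    induction n with
    | zero => rwa [hρ0]
    | succ n ih => exact ⟨τ n, hnext n ih⟩
  have hanti : Antitone τ := antitone_nat_of_succ_le fun n =>
    leastWinningStrategy_le (hnext n (hreg n)).1 (hnext n (hreg n)).2
  obtain ⟨N, hN⟩ := WellFoundedLT.antitone_chain_condition hanti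
  have hτN : WinsFrom Vi E π Win (τ N) (ρ N) := (leastWinningStrategy_spec (hreg N)).2
  refine hτN.run_mem hW hrun fun n hn hnV => ?_
  rw [hc n hnV, hN n hn]
  rfl

end Uniformization

section Game

variable {V C : Type*} {Vi : Set V} {E : Set (V × V)} {π : V → C} {Win : Set (ℕ → C)}

theorem exists_isStrategy_forall_winsFrom (hE : ∀ v : V, ∃ u, (v, u) ∈ E)
    (hW : PrefixIndependent Win) :
    ∃ σ, IsStrategy Vi E σ ∧ ∀ v ∈ WinRegionAll Vi E π Win, WinsFrom Vi E π Win σ v := by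
  obtain ⟨_, _⟩ := exists_wellFoundedLT (V → V)
  choose σ₀ hσ₀ using hE
  exact ⟨uniformStrategy Vi E π Win σ₀,
    fun v hv => isStrategy_leastWinningStrategy (fun w _ => hσ₀ w) v v hv,
    fun v hv => winsFrom_uniformStrategy hW σ₀ hv⟩

theorem mem_winRegionAll_of_edge (hW : PrefixIndependent Win) {v u : V} (hv : v ∈ Vi)
    (hvu : (v, u) ∈ E) (hu : u ∈ WinRegionAll Vi E π Win) : v ∈ WinRegionAll Vi E π Win := by
  by_contra hv'
  apply hv'
  obtain ⟨σ, hσ, hσu⟩ := hu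
  classical
  refine ⟨Function.update σ v u, fun x hx => ?_, fun ρ hρ0 hrun hc => ?_⟩
  · rcases eq_or_ne x v with rfl | hxv
    · simpa using hvu
    · simpa [hxv] using hσ x hx
  -- `σ` never wins from `v`, so the play never returns to `v` and follows `σ` after one step.
  have hne : ∀ n, WinsFrom Vi E π Win σ (ρ (n + 1)) → ρ (n + 1) ≠ v :=
    fun n hn hρv => hv' ⟨σ, hσ, hρv ▸ hn⟩
  have hfollow : ∀ n, WinsFrom Vi E π Win σ (ρ (n + 1)) → ρ (n + 1) ∈ Vi →
      ρ (n + 2) = σ (ρ (n + 1)) := fun n hn hnV => by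
    rw [hc (n + 1) hnV, Function.update_of_ne (hne n hn)]
  have hρ1 : ρ 1 = u := by simpa [hρ0] using hc 0 (hρ0 ▸ hv)
  have hwin : ∀ n, WinsFrom Vi E π Win σ (ρ (n + 1)) := by
    intro n
    induction n with
    | zero => rwa [hρ1]
    | succ n ih => exact ih.of_edge hW (hrun (n + 1)) (hfollow n ih)
  refine (hwin 0).run_mem hW hrun fun n hn hnV => ?_
  obtain ⟨m, rfl⟩ := Nat.exists_eq_add_of_le' hn
  exact hfollow m (hwin m) hnV

theorem mem_winRegionAll_of_forall_edge (hE : ∀ v : V, ∃ u, (v, u) ∈ E)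
    (hW : PrefixIndependent Win) {v : V}
    (hsucc : ∀ u, (v, u) ∈ E → u ∈ WinRegionAll Vi E π Win) : v ∈ WinRegionAll Vi E π Win := by
  obtain ⟨σ, hσ, hσwin⟩ := exists_isStrategy_forall_winsFrom hE hW
  refine ⟨σ, hσ, fun ρ hρ0 hrun hc => ?_⟩
  have hρ1 : WinsFrom Vi E π Win σ (ρ 1) := hσwin _ (hsucc _ (hρ0 ▸ hrun 0))
  exact hρ1.run_mem hW hrun fun n _ hnV => hc n hnV

theorem exists_edge_mem_compl_winRegionAll_union {Vj : Set V} {Win' : Set (ℕ → C)}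
    (hE : ∀ v : V, ∃ u, (v, u) ∈ E) (hW : PrefixIndependent Win) (hW' : PrefixIndependent Win')
    {v : V} (hv : v ∈ Vi) (hv' : v ∈ (WinRegionAll Vi E π Win ∪ WinRegionAll Vj E π Win')ᶜ) :
    ∃ u ∈ (WinRegionAll Vi E π Win ∪ WinRegionAll Vj E π Win')ᶜ, (v, u) ∈ E := by
  by_contra! hsucc
  simp only [Set.mem_compl_iff, not_imp_not] at hsucc
  apply hv'
  by_cases hwin : ∃ u, (v, u) ∈ E ∧ u ∈ WinRegionAll Vi E π Win
  · obtain ⟨u, hvu, hu⟩ := hwin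
    exact Or.inl (mem_winRegionAll_of_edge hW hv hvu hu)
  · exact Or.inr (mem_winRegionAll_of_forall_edge hE hW' fun u hvu =>
      (hsucc u hvu).resolve_left fun hu => hwin ⟨u, hvu, hu⟩)

end Game

theorem stmt9_general {V C : Type*}
    (V0 V1 : Set V) (E : Set (V × V)) (π : V → C) (W : Set (ℕ → C))
    (hcover : V0 ∪ V1 = Set.univ)
    (hE : ∀ v : V, ∃ u, (v, u) ∈ E)
    (hW : PrefixIndependent W)
    (Vm : Set V)
    (hVm : Vm = (WinRegionAll V0 E π W ∪ WinRegionAll V1 E π Wᶜ)ᶜ) :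
    ∀ v ∈ Vm, ∃ u ∈ Vm, (v, u) ∈ E := by
  subst hVm
  intro v hv
  have hv01 : v ∈ V0 ∪ V1 := hcover ▸ Set.mem_univ v
  rcases hv01 with hv0 | hv1
  · exact exists_edge_mem_compl_winRegionAll_union hE hW hW.compl hv0 hv
  · rw [Set.union_comm] at hv ⊢
    exact exists_edge_mem_compl_winRegionAll_union hE hW.compl hW hv1 hv

/-- every vertex of `V⁻ = V \ (W₀ᵐ(G) ∪ W₁ᵐ(G))` has a successor
in `V⁻`. -/
theorem stmt9 {V C : Type*} [Nonempty C]
    (V0 V1 : Set V) (E : Set (V × V)) (π : V → C) (W : Set (ℕ → C))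
    (hdisj : Disjoint V0 V1) (hcover : V0 ∪ V1 = Set.univ)
    (hE : ∀ v : V, ∃ u, (v, u) ∈ E)
    (hW : PrefixIndependent W)
    (Vm : Set V)
    (hVm : Vm = (WinRegionAll V0 E π W ∪ WinRegionAll V1 E π Wᶜ)ᶜ) :
    ∀ v ∈ Vm, ∃ u ∈ Vm, (v, u) ∈ E :=
  stmt9_general V0 V1 E π W hcover hE hW Vm hVm
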